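/- Suppose each f_j is σ-strongly convex (σ > 0) and each ∇f_j is Lipschitz continuous with constant L, d(x) is the unique global minimizer of d ↦ Q(x,d), and t(x) = Q(x,d(x)). Let β ∈ (0,1). Then for every α ∈ (0,1] with α ≤ σ(1−β)/L and every j = 1,…,m, F_j(x + α d(x)) ≤ F_j(x) + β α t(x). In particular, backtracking over {1, r, r², …} with r ∈ (0,1) accepts a step length α_k ≥ min{1, σ(1−β)r/L}. -/

import Mathlib

/-!
Along `d = d(x)`, the descent lemma for the `L`-smooth `f_j`, convexity of `g_j` on the segment
`[x, x + d]` and the Hessian bound `∇²f_j ⪰ σ I` coming from strong convexity give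
`F_j(x + α d) ≤ F_j(x) + α Q_j(x, d) − (α/2)(σ − α L)‖d‖²`.
Since `Q_j(x, d) ≤ t ≤ Q(x, 0) = 0`, for `α L ≤ σ(1 − β) ≤ σ` the last term is nonpositive and
`α t ≤ β α t`. Backtracking accepts the first `r^k ≤ σ(1 − β)/L`, and then either `k = 0` or
`r^(k-1) > σ(1 − β)/L`.
-/

open Filter Topology Finset
open scoped RealInnerProductSpace

noncomputable section

/-- One-sided directional derivative: `c = F'(x; d) = lim_{α→0⁺} (F(x+αd) − F(x))/α`. -/
def HasDirDeriv {n : ℕ} (F : EuclideanSpace ℝ (Fin n) → ℝ)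
    (x d : EuclideanSpace ℝ (Fin n)) (c : ℝ) : Prop :=
  Filter.Tendsto (fun α : ℝ => (F (x + α • d) - F x) / α) (nhdsWithin 0 (Set.Ioi 0)) (nhds c)

/-- Subdifferential of a convex function: `∂h(x) = {ξ : h(y) ≥ h(x) + ⟪ξ, y − x⟫ ∀ y}`. -/
def subdiff {n : ℕ} (h : EuclideanSpace ℝ (Fin n) → ℝ) (x : EuclideanSpace ℝ (Fin n)) :
    Set (EuclideanSpace ℝ (Fin n)) :=
  {ξ | ∀ y, h x + ⟪ξ, y - x⟫ ≤ h y}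

/-- `σ`-strong convexity: `f(αx+(1−α)y) ≤ αf(x)+(1−α)f(y) − (σ/2)α(1−α)‖x−y‖²`. -/
def StronglyConvexFun {n : ℕ} (σ : ℝ) (f : EuclideanSpace ℝ (Fin n) → ℝ) : Prop :=
  ∀ x y : EuclideanSpace ℝ (Fin n), ∀ α : ℝ, 0 ≤ α → α ≤ 1 →
    f (α • x + (1 - α) • y) ≤ α * f x + (1 - α) * f y - σ / 2 * α * (1 - α) * ‖x - y‖ ^ 2

/-- `Q_j(x,d) = ∇f_j(x)ᵀd + ½ dᵀ∇²f_j(x)d + g_j(x+d) − g_j(x)`, where the Hessian is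
the Fréchet derivative of the gradient. -/
def Qj {n m : ℕ} (f g : Fin (m + 1) → EuclideanSpace ℝ (Fin n) → ℝ)
    (j : Fin (m + 1)) (x d : EuclideanSpace ℝ (Fin n)) : ℝ :=
  ⟪gradient (f j) x, d⟫ + (1 / 2) * ⟪(fderiv ℝ (gradient (f j)) x) d, d⟫
    + g j (x + d) - g j x

/-- `Q(x,d) = max_{1 ≤ j ≤ m} Q_j(x,d)`. -/
def Qmax {n m : ℕ} (f g : Fin (m + 1) → EuclideanSpace ℝ (Fin n) → ℝ)
    (x d : EuclideanSpace ℝ (Fin n)) : ℝ :=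
  Finset.univ.sup' Finset.univ_nonempty (fun j => Qj f g j x d)

section InnerProductSpace

variable {E : Type*} [NormedAddCommGroup E] [InnerProductSpace ℝ E] [CompleteSpace E]
  {f : E → ℝ} {m L : ℝ} {x : E}

lemma hasDerivAt_comp_add_smul {v : E} {t : ℝ} (hf : DifferentiableAt ℝ f (x + t • v)) :
    HasDerivAt (fun s : ℝ => f (x + s • v)) ⟪gradient f (x + t • v), v⟫ t := by
  rw [inner_gradient_left]
  refine hf.hasFDerivAt.comp_hasDerivAt t ?_
  simpa using ((hasDerivAt_id t).smul_const v).const_add x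

lemma StrongConvexOn.add_inner_gradient_le (hf : StrongConvexOn Set.univ m f)
    (hx : DifferentiableAt ℝ f x) (y : E) :
    f x + ⟪gradient f x, y - x⟫ + m / 2 * ‖y - x‖ ^ 2 ≤ f y := by
  have hslope : Tendsto (fun α : ℝ => α⁻¹ • (f (x + α • (y - x)) - f x)) (𝓝[>] 0)
      (𝓝 ⟪gradient f x, y - x⟫) := by
    rw [inner_gradient_left]
    exact (hx.hasFDerivAt.hasLineDerivAt _).tendsto_slope_zero_right
  have hbound : Tendsto (fun α : ℝ => f y - f x - m / 2 * (1 - α) * ‖y - x‖ ^ 2) (𝓝[>] 0)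
      (𝓝 (f y - f x - m / 2 * ‖y - x‖ ^ 2)) := by
    have hc : Continuous fun α : ℝ => f y - f x - m / 2 * (1 - α) * ‖y - x‖ ^ 2 := by fun_prop
    simpa using (hc.tendsto 0).mono_left nhdsWithin_le_nhds
  have hle : ⟪gradient f x, y - x⟫ ≤ f y - f x - m / 2 * ‖y - x‖ ^ 2 := by
    refine le_of_tendsto_of_tendsto hslope hbound ?_
    filter_upwards [Ioc_mem_nhdsGT (zero_lt_one' ℝ)] with α ⟨hα0, hα1⟩
    have h := hf.2 (Set.mem_univ y) (Set.mem_univ x) hα0.le (sub_nonneg.2 hα1)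
      (add_sub_cancel α 1)
    rw [show α • y + (1 - α) • x = x + α • (y - x) by module, smul_eq_mul, smul_eq_mul] at h
    rw [smul_eq_mul, inv_mul_le_iff₀ hα0]
    linarith
  linarith

lemma StrongConvexOn.inner_gradient_sub_gradient_ge (hf : StrongConvexOn Set.univ m f) {y : E}
    (hx : DifferentiableAt ℝ f x) (hy : DifferentiableAt ℝ f y) :
    m * ‖y - x‖ ^ 2 ≤ ⟪gradient f y - gradient f x, y - x⟫ := by
  have h₁ := hf.add_inner_gradient_le hx y
  have h₂ := hf.add_inner_gradient_le hy x
  rw [← neg_sub y x, inner_neg_right, norm_neg] at h₂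
  rw [inner_sub_left]
  linarith

lemma StrongConvexOn.inner_fderiv_gradient_ge (hf : StrongConvexOn Set.univ m f)
    (hd : Differentiable ℝ f) (hx : DifferentiableAt ℝ (gradient f) x) (d : E) :
    m * ‖d‖ ^ 2 ≤ ⟪fderiv ℝ (gradient f) x d, d⟫ := by
  have hslope : Tendsto (fun s : ℝ => ⟪s⁻¹ • (gradient f (x + s • d) - gradient f x), d⟫) (𝓝[>] 0)
      (𝓝 ⟪fderiv ℝ (gradient f) x d, d⟫) :=
    (hx.hasFDerivAt.hasLineDerivAt d).tendsto_slope_zero_right.inner tendsto_const_nhds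
  refine ge_of_tendsto hslope ?_
  filter_upwards [self_mem_nhdsWithin] with s (hs : 0 < s)
  have h := hf.inner_gradient_sub_gradient_ge (hd x) (hd (x + s • d))
  rw [add_sub_cancel_left, inner_smul_right, norm_smul, Real.norm_of_nonneg hs.le] at h
  rw [real_inner_smul_left, le_inv_mul_iff₀ hs]
  nlinarith

lemma le_add_inner_gradient_add_of_lipschitz (hf : Differentiable ℝ f)
    (hLip : ∀ y z, ‖gradient f y - gradient f z‖ ≤ L * ‖y - z‖) (x v : E) :
    f (x + v) ≤ f x + ⟪gradient f x, v⟫ + L / 2 * ‖v‖ ^ 2 := by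
  -- `ψ` is `f` on the segment minus its quadratic model; the Lipschitz bound makes it antitone.
  set ψ : ℝ → ℝ := fun t => f (x + t • v) - t * ⟪gradient f x, v⟫ - L / 2 * t ^ 2 * ‖v‖ ^ 2
  have hψ : ∀ t, HasDerivAt ψ (⟪gradient f (x + t • v) - gradient f x, v⟫ - L * t * ‖v‖ ^ 2) t := by
    intro t
    have h := ((hasDerivAt_comp_add_smul (x := x) (v := v) (hf _)).sub ((hasDerivAt_id t).mul_const ⟪gradient f x, v⟫)).sub
      (((hasDerivAt_pow 2 t).const_mul (L / 2)).mul_const (‖v‖ ^ 2))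
    exact h.congr_deriv (by rw [inner_sub_left]; push_cast; ring)
  have hψ' : ∀ t ∈ interior (Set.Icc (0 : ℝ) 1), deriv ψ t ≤ 0 := by
    intro t ht
    rw [interior_Icc] at ht
    rw [(hψ t).deriv, sub_nonpos]
    calc ⟪gradient f (x + t • v) - gradient f x, v⟫
        ≤ ‖gradient f (x + t • v) - gradient f x‖ * ‖v‖ := real_inner_le_norm _ _
      _ ≤ L * ‖t • v‖ * ‖v‖ := by
          gcongr
          simpa using hLip (x + t • v) x
      _ = L * t * ‖v‖ ^ 2 := by
          rw [norm_smul, Real.norm_of_nonneg ht.1.le]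
          ring
  have hanti : ψ 1 ≤ ψ 0 :=
    antitoneOn_of_deriv_nonpos (convex_Icc 0 1) (fun t _ => (hψ t).continuousAt.continuousWithinAt)
      (fun t _ => (hψ t).differentiableAt.differentiableWithinAt) hψ'
      (Set.left_mem_Icc.2 zero_le_one) (Set.right_mem_Icc.2 zero_le_one) zero_le_one
  simp only [ψ, one_smul, zero_smul, add_zero, one_mul, zero_mul, one_pow, mul_one, ne_eq,
    OfNat.ofNat_ne_zero, not_false_eq_true, zero_pow, mul_zero, sub_zero] at hanti
  linarith

lemma ContDiff.differentiable_gradient (hf : ContDiff ℝ 2 f) : Differentiable ℝ (gradient f) :=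
  (InnerProductSpace.toDual ℝ E).symm.toContinuousLinearEquiv.differentiable.comp
    ((hf.fderiv_right (m := 1) le_rfl).differentiable one_ne_zero)

end InnerProductSpace

lemma ConvexOn.le_add_smul_sub {E : Type*} [AddCommGroup E] [Module ℝ E] {g : E → ℝ}
    (hg : ConvexOn ℝ Set.univ g) (x d : E) {α : ℝ} (hα0 : 0 ≤ α) (hα1 : α ≤ 1) :
    g (x + α • d) ≤ g x + α * (g (x + d) - g x) := by
  have h := hg.2 (Set.mem_univ (x + d)) (Set.mem_univ x) hα0 (sub_nonneg.2 hα1)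
    (add_sub_cancel α 1)
  rw [show α • (x + d) + (1 - α) • x = x + α • d by module, smul_eq_mul, smul_eq_mul] at h
  linarith

lemma exists_pow_le_and_min_one_mul_le_pow {r c : ℝ} (hr0 : 0 < r) (hr1 : r < 1) (hc : 0 < c) :
    ∃ k : ℕ, r ^ k ≤ c ∧ min 1 (c * r) ≤ r ^ k := by
  rcases le_or_gt 1 c with hc1 | hc1
  · exact ⟨0, by simpa using hc1, by simp⟩
  · obtain ⟨k, hk, hck⟩ := exists_nat_pow_near_of_lt_one hc hc1.le hr0 hr1
    refine ⟨k + 1, hk.le, (min_le_right _ _).trans ?_⟩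
    rw [pow_succ]
    exact mul_le_mul_of_nonneg_right hck hr0.le

section MultiobjectiveModel

variable {n m : ℕ}

lemma StronglyConvexFun.strongConvexOn {σ : ℝ} {f : EuclideanSpace ℝ (Fin n) → ℝ}
    (hf : StronglyConvexFun σ f) : StrongConvexOn Set.univ σ f := by
  refine ⟨convex_univ, fun x _ y _ a b ha hb hab => ?_⟩
  obtain rfl : b = 1 - a := eq_sub_of_add_eq' hab
  have h := hf x y a ha (by linarith)
  simp only [smul_eq_mul]
  linarith

variable (f g : Fin (m + 1) → EuclideanSpace ℝ (Fin n) → ℝ)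

lemma Qj_le_Qmax (j : Fin (m + 1)) (x d : EuclideanSpace ℝ (Fin n)) :
    Qj f g j x d ≤ Qmax f g x d :=
  Finset.le_sup' (fun j => Qj f g j x d) (Finset.mem_univ j)

lemma Qmax_zero_right (x : EuclideanSpace ℝ (Fin n)) : Qmax f g x 0 = 0 := by
  simp [Qmax, Qj]

variable {f g}

lemma add_add_smul_le_add_mul_Qj {σ L α : ℝ} {j : Fin (m + 1)}
    (hfsc : StronglyConvexFun σ (f j)) (hfC2 : ContDiff ℝ 2 (f j))
    (hLip : ∀ y z, ‖gradient (f j) y - gradient (f j) z‖ ≤ L * ‖y - z‖)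
    (hg : ConvexOn ℝ Set.univ (g j)) (x d : EuclideanSpace ℝ (Fin n)) (hα0 : 0 ≤ α)
    (hα1 : α ≤ 1) :
    f j (x + α • d) + g j (x + α • d) ≤
      f j x + g j x + α * Qj f g j x d - α / 2 * (σ - α * L) * ‖d‖ ^ 2 := by
  have hf : Differentiable ℝ (f j) := hfC2.differentiable two_ne_zero
  have hdescent := le_add_inner_gradient_add_of_lipschitz hf hLip x (α • d)
  have hsecant := hg.le_add_smul_sub x d hα0 hα1
  have hhess := hfsc.strongConvexOn.inner_fderiv_gradient_ge hf (hfC2.differentiable_gradient x) d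
  rw [real_inner_smul_right, norm_smul, Real.norm_of_nonneg hα0] at hdescent
  unfold Qj
  nlinarith [mul_le_mul_of_nonneg_left hhess hα0]

end MultiobjectiveModel

theorem armijo_step_length_bound_general {n m : ℕ} (σ L : ℝ) (hσ : 0 < σ) (hL : 0 < L)
    (f g : Fin (m + 1) → EuclideanSpace ℝ (Fin n) → ℝ)
    (hfsc : ∀ j, StronglyConvexFun σ (f j))
    (hfC2 : ∀ j, ContDiff ℝ 2 (f j))
    (hLip : ∀ j (y z : EuclideanSpace ℝ (Fin n)),
      ‖gradient (f j) y - gradient (f j) z‖ ≤ L * ‖y - z‖)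
    (hgconv : ∀ j, ConvexOn ℝ Set.univ (g j))
    (x dx : EuclideanSpace ℝ (Fin n)) (t : ℝ)
    (hmin : ∀ d, Qmax f g x dx ≤ Qmax f g x d)
    (ht : t = Qmax f g x dx)
    (β : ℝ) (hβ0 : 0 < β) (hβ1 : β < 1) :
    (∀ α : ℝ, 0 < α → α ≤ 1 → α ≤ σ * (1 - β) / L → ∀ j,
      f j (x + α • dx) + g j (x + α • dx) ≤ f j x + g j x + β * α * t) ∧
    (∀ r : ℝ, 0 < r → r < 1 → ∃ k : ℕ,
      (∀ j, f j (x + r ^ k • dx) + g j (x + r ^ k • dx) ≤ f j x + g j x + β * r ^ k * t) ∧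
      min 1 (σ * (1 - β) * r / L) ≤ r ^ k) := by
  have ht0 : t ≤ 0 := ht ▸ (hmin 0).trans_eq (Qmax_zero_right f g x)
  have armijo : ∀ α : ℝ, 0 < α → α ≤ 1 → α ≤ σ * (1 - β) / L → ∀ j,
      f j (x + α • dx) + g j (x + α • dx) ≤ f j x + g j x + β * α * t := by
    intro α hα0 hα1 hαL j
    have hαLσ : α * L ≤ σ := by
      rw [le_div_iff₀ hL] at hαL
      nlinarith
    have hQ : Qj f g j x dx ≤ t := ht ▸ Qj_le_Qmax f g j x dx
    have hF := add_add_smul_le_add_mul_Qj (hfsc j) (hfC2 j) (hLip j) (hgconv j) x dx hα0.le hα1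
    have hcurv : 0 ≤ α / 2 * (σ - α * L) * ‖dx‖ ^ 2 := by
      have := sub_nonneg.2 hαLσ
      positivity
    have hQα : α * Qj f g j x dx ≤ α * t := mul_le_mul_of_nonneg_left hQ hα0.le
    have hβt : (1 - β) * α * t ≤ 0 :=
      mul_nonpos_of_nonneg_of_nonpos (mul_nonneg (sub_nonneg.2 hβ1.le) hα0.le) ht0
    linarith
  refine ⟨armijo, fun r hr0 hr1 => ?_⟩
  obtain ⟨k, hk, hmin_le⟩ :=
    exists_pow_le_and_min_one_mul_le_pow hr0 hr1 (by positivity : 0 < σ * (1 - β) / L)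
  refine ⟨k, armijo _ (pow_pos hr0 k) (pow_le_one₀ hr0.le hr1.le) hk, ?_⟩
  rwa [div_mul_eq_mul_div] at hmin_le

/-- with each `f_j` `σ`-strongly convex and `∇f_j` `L`-Lipschitz, `d(x)` the
unique global minimizer of `d ↦ Q(x,d)`, `t(x) = Q(x,d(x))` and `β ∈ (0,1)`: every step
length `α ∈ (0,1]` with `α ≤ σ(1−β)/L` satisfies the Armijo condition
`F_j(x + α d(x)) ≤ F_j(x) + β α t(x)` for all `j` (with `F_j = f_j + g_j`); in particular,
backtracking over `{1, r, r², …}` with `r ∈ (0,1)` accepts a step length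
`α_k = r^k ≥ min {1, σ(1−β)r/L}`. -/
theorem armijo_step_length_bound {n m : ℕ} (σ L : ℝ) (hσ : 0 < σ) (hL : 0 < L)
    (f g : Fin (m + 1) → EuclideanSpace ℝ (Fin n) → ℝ)
    (hfsc : ∀ j, StronglyConvexFun σ (f j))
    (hfC2 : ∀ j, ContDiff ℝ 2 (f j))
    (hLip : ∀ j (y z : EuclideanSpace ℝ (Fin n)),
      ‖gradient (f j) y - gradient (f j) z‖ ≤ L * ‖y - z‖)
    (hgconv : ∀ j, ConvexOn ℝ Set.univ (g j))
    (hgcont : ∀ j, Continuous (g j))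
    (x dx : EuclideanSpace ℝ (Fin n)) (t : ℝ)
    (hmin : ∀ d, Qmax f g x dx ≤ Qmax f g x d)
    (huniq : ∀ d, (∀ d', Qmax f g x d ≤ Qmax f g x d') → d = dx)
    (ht : t = Qmax f g x dx)
    (β : ℝ) (hβ0 : 0 < β) (hβ1 : β < 1) :
    (∀ α : ℝ, 0 < α → α ≤ 1 → α ≤ σ * (1 - β) / L → ∀ j,
      f j (x + α • dx) + g j (x + α • dx) ≤ f j x + g j x + β * α * t) ∧
    (∀ r : ℝ, 0 < r → r < 1 → ∃ k : ℕ,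
      (∀ j, f j (x + r ^ k • dx) + g j (x + r ^ k • dx) ≤ f j x + g j x + β * r ^ k * t) ∧
      min 1 (σ * (1 - β) * r / L) ≤ r ^ k) :=
  armijo_step_length_bound_general σ L hσ hL f g hfsc hfC2 hLip hgconv x dx t hmin ht β hβ0 hβ1
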